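/- Let A = c(ξ'), N = c(dx_n) be endomorphisms of a 4-dimensional space with A² = N² = −id, AN = −NA, trace A = trace N = 0, trace(AN) = 0. Let X = c(df) be any endomorphism of the form Σ_j a_j c(e_j) in the Clifford algebra. Then trace[((−(iz+2)/(4(z−i)²))·A X A − (i/(4(z−i)²))·(N X A + A X N) − (iz/(4(z−i)²))·N X N)·(2i/f)·((1−z²)/(1+z²)²·N − 2z/(1+z²)²·A)] = (i/(f(1+z²)²))·trace(NX) + (1/(f(1+z²)²))·trace(AX), as rational functions of z. -/

import Mathlib

open Complex

/-!
By cyclicity of the trace every term is `trace (W * X)` for a word `W` of length three in `A`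
and `N`, and the relations `A² = N² = −1`, `AN = −NA` reduce each such word to `±A` or `±N`.
What is left is an identity between rational functions of `z`, which rests on
`1 − z² + 2iz = −(z − i)²`.
-/

section Clifford

variable {R : Type*} [Ring R] {A N : R}

theorem mul_mul_eq_self_of_anticomm (hA2 : A * A = -1) (hAN : A * N = -(N * A)) :
    A * N * A = N := by
  rw [hAN, neg_mul, mul_assoc, hA2, mul_neg_one, neg_neg]

theorem mul_mul_self_eq_neg (hN2 : N * N = -1) : A * N * N = -A := by
  rw [mul_assoc, hN2, mul_neg_one]

theorem mul_self_mul_eq_neg (hA2 : A * A = -1) : A * A * N = -N := by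
  rw [hA2, neg_one_mul]

end Clifford

namespace LinearMap

variable {R M : Type*} [CommRing R] [AddCommGroup M] [Module R M]

theorem trace_mul_mul_mul_eq_of_eq {P Q T W : Module.End R M} (X : Module.End R M)
    (hW : Q * T * P = W) : trace R M (P * X * Q * T) = trace R M (W * X) := by
  rw [mul_assoc _ Q, trace_mul_cycle, hW]

theorem trace_clifford_sandwich {A N : Module.End R M}
    (hA2 : A * A = -1) (hN2 : N * N = -1) (hAN : A * N = -(N * A))
    (X : Module.End R M) (α β γ p q : R) :
    trace R M ((α • (A * X * A) - β • (N * X * A + A * X * N) - γ • (N * X * N)) *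
        (p • N - q • A)) =
      ((α + γ) * p - 2 * β * q) * trace R M (N * X) +
        ((α + γ) * q + 2 * β * p) * trace R M (A * X) := by
  have hNA : N * A = -(A * N) := by rw [hAN, neg_neg]
  simp only [sub_mul, add_mul, mul_sub, mul_add, smul_mul_assoc, mul_smul_comm, map_sub,
    map_add, map_smul, smul_eq_mul]
  rw [trace_mul_mul_mul_eq_of_eq X (mul_mul_eq_self_of_anticomm hA2 hAN),
    trace_mul_mul_mul_eq_of_eq X (mul_self_mul_eq_neg (N := A) hA2),
    trace_mul_mul_mul_eq_of_eq X (mul_mul_self_eq_neg hN2),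
    trace_mul_mul_mul_eq_of_eq X (mul_self_mul_eq_neg hA2),
    trace_mul_mul_mul_eq_of_eq X (mul_self_mul_eq_neg hN2),
    trace_mul_mul_mul_eq_of_eq X (mul_mul_self_eq_neg hA2),
    trace_mul_mul_mul_eq_of_eq X (mul_self_mul_eq_neg (N := N) hN2),
    trace_mul_mul_mul_eq_of_eq X (mul_mul_eq_self_of_anticomm hN2 hNA)]
  simp only [neg_mul, map_neg]
  ring

end LinearMap

theorem stmt11_general {S : Type*} [AddCommGroup S] [Module ℂ S]
    (A N X : Module.End ℂ S)
    (hA2 : A * A = -1) (hN2 : N * N = -1) (hAN : A * N = -(N * A))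
    (f : ℂ) :
    ∀ z : ℂ, z ≠ I → z ≠ -I →
      LinearMap.trace ℂ S
          ((-(((I * z + 2) / (4 * (z - I) ^ 2))) • (A * X * A) -
              (I / (4 * (z - I) ^ 2)) • (N * X * A + A * X * N) -
              (I * z / (4 * (z - I) ^ 2)) • (N * X * N)) *
            ((2 * I / f) •
              (((1 - z ^ 2) / (1 + z ^ 2) ^ 2) • N - (2 * z / (1 + z ^ 2) ^ 2) • A))) =
        (I / (f * (1 + z ^ 2) ^ 2)) * LinearMap.trace ℂ S (N * X) +
          (1 / (f * (1 + z ^ 2) ^ 2)) * LinearMap.trace ℂ S (A * X) := by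
  intro z hz hz'
  have hzI : z - I ≠ 0 := sub_ne_zero.mpr hz
  have hz2 : 1 + z ^ 2 ≠ 0 := by
    have hzI' : z + I ≠ 0 := by rwa [← sub_neg_eq_add, sub_ne_zero]
    have : 1 + z ^ 2 = (z + I) * (z - I) := by linear_combination I_sq
    rw [this]; exact mul_ne_zero hzI' hzI
  set α := -((I * z + 2) / (4 * (z - I) ^ 2))
  set β := I / (4 * (z - I) ^ 2)
  set γ := I * z / (4 * (z - I) ^ 2)
  set p := (1 - z ^ 2) / (1 + z ^ 2) ^ 2
  set q := 2 * z / (1 + z ^ 2) ^ 2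
  have hN : (α + γ) * p - 2 * β * q = 1 / (2 * (1 + z ^ 2) ^ 2) := by
    simp only [α, β, γ, p, q]
    field_simp
    linear_combination -4 * I_sq
  have hA : (α + γ) * q + 2 * β * p = -I / (2 * (1 + z ^ 2) ^ 2) := by
    simp only [α, β, γ, p, q]
    field_simp
    linear_combination (4 * I - 8 * z) * I_sq
  rw [mul_smul_comm, map_smul, LinearMap.trace_clifford_sandwich hA2 hN2 hAN, hN, hA,
    smul_eq_mul]
  field_simp
  linear_combination -LinearMap.trace ℂ S (A * X) / f * I_sq

/-- In a 4-dimensional Clifford module `S`, with `A = c(ξ')`, `N = c(dxₙ)`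
satisfying `A² = N² = −id`, `AN = −NA`, `trace A = trace N = trace(AN) = 0`, and
`X = c(df) = Σⱼ aⱼ c(eⱼ)` an element of the degree-one Clifford span (so `XA + AX` and
`XN + NX` are scalars), `f` a nonzero scalar, identity (4.33) of the paper holds as an
identity of rational functions of `z`:
`trace[(−((iz+2)/(4(z−i)²))·AXA − (i/(4(z−i)²))·(NXA + AXN) − (iz/(4(z−i)²))·NXN)
 ·(2i/f)·((1−z²)/(1+z²)²·N − 2z/(1+z²)²·A)]
 = (i/(f(1+z²)²))·trace(NX) + (1/(f(1+z²)²))·trace(AX)`. -/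
theorem stmt11 {S : Type*} [AddCommGroup S] [Module ℂ S] [FiniteDimensional ℂ S]
    (hS : Module.finrank ℂ S = 4)
    (A N X : Module.End ℂ S)
    (hA2 : A * A = -1) (hN2 : N * N = -1) (hAN : A * N = -(N * A))
    (htrA : LinearMap.trace ℂ S A = 0) (htrN : LinearMap.trace ℂ S N = 0)
    (htrAN : LinearMap.trace ℂ S (A * N) = 0)
    (a b : ℂ)
    (hXA : X * A + A * X = a • (1 : Module.End ℂ S))
    (hXN : X * N + N * X = b • (1 : Module.End ℂ S))
    (f : ℂ) (hf : f ≠ 0) :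
    ∀ z : ℂ, z ≠ I → z ≠ -I →
      LinearMap.trace ℂ S
          ((-(((I * z + 2) / (4 * (z - I) ^ 2))) • (A * X * A) -
              (I / (4 * (z - I) ^ 2)) • (N * X * A + A * X * N) -
              (I * z / (4 * (z - I) ^ 2)) • (N * X * N)) *
            ((2 * I / f) •
              (((1 - z ^ 2) / (1 + z ^ 2) ^ 2) • N - (2 * z / (1 + z ^ 2) ^ 2) • A))) =
        (I / (f * (1 + z ^ 2) ^ 2)) * LinearMap.trace ℂ S (N * X) +
          (1 / (f * (1 + z ^ 2) ^ 2)) * LinearMap.trace ℂ S (A * X) :=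
  stmt11_general A N X hA2 hN2 hAN f
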